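/- arXiv:1711.10802 — 3 statements merged into one kernel-verified Lean document; each statement's English description precedes it below -/
import Mathlib

section
/- Euler's pentagonal number theorem: ∏_{k≥1}(1-q^k) = ∑_{m∈ℤ} (-1)^m q^{m(3m-1)/2} as formal power series. -/
/-!
Mathlib's pentagonal number theorem says that the partial products `∏ k ∈ s, (1 - X ^ (k + 1))`
agree, coefficient by coefficient, with `pentagonalSeries` once `s` is large. A factor
`1 - X ^ (k + 1)` with `k ≥ n` is `1` modulo `X ^ (n + 1)`, so the coefficient of `X ^ n` is
already that of the first `n` factors. On the other side, `|m| ≤ pentagonal m`, so the index of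
the only pentagonal number equal to `n` lies in the finite range of summation.
-/

open PowerSeries Finset

theorem coeff_mul_eq_of_X_pow_dvd_sub_one {R : Type*} [CommRing R] {n : ℕ} (f : R⟦X⟧) {g : R⟦X⟧}
    (hg : X ^ (n + 1) ∣ g - 1) : coeff n (f * g) = coeff n f := by
  have hdvd : X ^ (n + 1) ∣ f * g - f := by
    simpa only [mul_sub, mul_one] using dvd_mul_of_dvd_right hg f
  simpa [sub_eq_zero] using X_pow_dvd_iff.mp hdvd n n.lt_succ_self

theorem X_pow_dvd_prod_one_sub_X_pow_sub_one {R : Type*} [CommRing R] {n : ℕ} {s : Finset ℕ}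
    (hs : ∀ k ∈ s, n ≤ k) : (X : R⟦X⟧) ^ (n + 1) ∣ (∏ k ∈ s, (1 - X ^ (k + 1))) - 1 := by
  refine prod_induction _ (fun g ↦ X ^ (n + 1) ∣ g - 1) (fun a b ha hb ↦ ?_) (by simp)
    fun k hk ↦ ?_
  · have : a * b - 1 = (a - 1) * b + (b - 1) := by ring
    rw [this]
    exact dvd_add (dvd_mul_of_dvd_left ha b) hb
  · simpa using pow_dvd_pow X (Nat.succ_le_succ (hs k hk))

theorem coeff_prod_range_one_sub_X_pow (R : Type*) [CommRing R] (n : ℕ) :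
    coeff n (∏ k ∈ range n, (1 - X ^ (k + 1) : R⟦X⟧)) = coeff n (pentagonalSeries R) := by
  obtain ⟨s₀, hs₀⟩ := Filter.eventually_atTop.mp (coeff_prod_one_sub_X_pow_eventually_eq R n)
  rw [← hs₀ (s₀ ∪ range n) subset_union_left,
    ← prod_sdiff (subset_union_right (s₁ := s₀)), mul_comm]
  refine (coeff_mul_eq_of_X_pow_dvd_sub_one _ (X_pow_dvd_prod_one_sub_X_pow_sub_one ?_)).symm
  intro k hk
  simpa using (mem_sdiff.mp hk).2

theorem natAbs_le_pentagonal (k : ℤ) : k.natAbs ≤ pentagonal k := by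
  have h := two_mul_natCast_pentagonal k
  zify
  rcases abs_cases k with ⟨hk, -⟩ | ⟨hk, -⟩ <;> rw [hk] <;> nlinarith

theorem coeff_pentagonalSeries_eq_sum (R : Type*) [CommRing R] (n : ℕ) {s : Finset ℤ}
    (hs : ∀ k, pentagonal k = n → k ∈ s) :
    coeff n (pentagonalSeries R) = ∑ k ∈ s, if pentagonal k = n then (k.negOnePow : R) else 0 := by
  by_cases hn : n ∈ Set.range pentagonal
  · obtain ⟨k, rfl⟩ := hn
    simp [pentagonal_inj, hs k rfl]
  · rw [coeff_pentagonalSeries_eq_zero R hn, eq_comm]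
    exact sum_eq_zero fun k _ ↦ if_neg fun hk ↦ hn ⟨k, hk⟩

/-- Euler's pentagonal number theorem, stated coefficientwise: for each `n`, the coefficient of
`q^n` in `∏_{k≥1} (1 - q^k)` (factors with `k > n` do not affect this coefficient) equals the sum
over all integers `m` (those with pentagonal number exceeding `n` contribute `0`) of
`(-1)^m` when `m(3m-1)/2 = n`. -/
theorem pentagonal_number_theorem (n : ℕ) :
    PowerSeries.coeff n (∏ k ∈ Finset.Icc 1 n, (1 - (PowerSeries.X : PowerSeries ℤ) ^ k)) =
      ∑ m ∈ Finset.Icc (-(n : ℤ) - 1) ((n : ℤ) + 1),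
        if m * (3 * m - 1) / 2 = (n : ℤ) then (-1 : ℤ) ^ m.natAbs else 0 := by
  have hprod : ∏ k ∈ Icc 1 n, (1 - X ^ k : ℤ⟦X⟧) = ∏ k ∈ range n, (1 - X ^ (k + 1)) := by
    rw [← Ico_add_one_right_eq_Icc, prod_Ico_eq_prod_range]
    simp [add_comm]
  have hbound : ∀ m, pentagonal m = n → m ∈ Icc (-(n : ℤ) - 1) (n + 1) := by
    intro m hm
    have := natAbs_le_pentagonal m
    simp only [mem_Icc]
    omega
  rw [hprod, coeff_prod_range_one_sub_X_pow, coeff_pentagonalSeries_eq_sum ℤ n hbound]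
  refine sum_congr rfl fun m _ ↦ ?_
  simp only [← natCast_pentagonal, Nat.cast_inj, Int.coe_negOnePow]
end

section
/- Jacobi's triple product identity: ∏_{k≥1} (1-q^{2k})(1+q^{2k-1} z)(1+q^{2k-1} z^{-1}) = ∑_{m∈ℤ} q^{m^2} z^m, as an identity of formal Laurent series. -/
/-!
Cauchy's finite form of the identity: adding the factors one at a time,
`∏_{j ≤ a} (1 + z q^(2j-1)) ∏_{j ≤ b} (1 + z⁻¹ q^(2j-1)) = ∑_m [a+b, b+m]_{q²} q^(m²) z^m`,
where a factor with `z` (resp. `z⁻¹`) is absorbed by one (resp. the other) q-Pascal rule.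
Take `a = b = N = n + 1`. After multiplication by `∏_{k ≤ N} (1 - q^(2k))`, the coefficient of
`z^m` is `(q²; q²)_N [2N, N+m]_{q²} q^(m²)`. The q-binomial identity
`[2N, K] (q²; q²)_K = ∏_{i < K} (1 - q^(2(2N-i)))` with `K = N - |m|` makes
`(q²; q²)_N [2N, N+m]_{q²}` a product of factors `1 - q^(2i)` with `i > K`, hence
`≡ 1 mod q^(2(K+1))`. Since `2(K+1) + m² > n`, the coefficient of `q^n` is `z^m` if `m² = n`
and `0` otherwise.
-/

open Finset PowerSeries LaurentPolynomial

section GaussBinom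

variable {A : Type*} [CommRing A] (t : A)

/-- The Gaussian binomial coefficient `[n, k]_t`, for all `k : ℤ`; it vanishes unless
`0 ≤ k ≤ n`, so the truncation in `k.toNat` is harmless. -/
def gaussBinom : ℕ → ℤ → A
  | 0, k => if k = 0 then 1 else 0
  | n + 1, k => gaussBinom n (k - 1) + t ^ k.toNat * gaussBinom n k

theorem gaussBinom_zero (k : ℤ) : gaussBinom t 0 k = if k = 0 then 1 else 0 := rfl

theorem gaussBinom_succ (n : ℕ) (k : ℤ) :
    gaussBinom t (n + 1) k = gaussBinom t n (k - 1) + t ^ k.toNat * gaussBinom t n k := rfl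

theorem gaussBinom_of_neg {k : ℤ} (hk : k < 0) (n : ℕ) : gaussBinom t n k = 0 := by
  induction n generalizing k with
  | zero => simp [gaussBinom_zero, hk.ne]
  | succ n ih => rw [gaussBinom_succ, ih (by omega), ih hk, mul_zero, add_zero]

theorem gaussBinom_of_lt {n : ℕ} {k : ℤ} (hk : n < k) : gaussBinom t n k = 0 := by
  induction n generalizing k with
  | zero => simp [gaussBinom_zero]; omega
  | succ n ih => rw [gaussBinom_succ, ih (by omega), ih (by omega), mul_zero, add_zero]

theorem support_gaussBinom_subset (n : ℕ) :
    Function.support (gaussBinom t n) ⊆ Set.Icc 0 n := fun k hk => by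
  by_contra h
  rcases not_and_or.mp h with h | h
  · exact hk (gaussBinom_of_neg t (not_le.mp h) n)
  · exact hk (gaussBinom_of_lt t (not_le.mp h))

theorem gaussBinom_zero_right (n : ℕ) : gaussBinom t n 0 = 1 := by
  induction n with
  | zero => simp [gaussBinom_zero]
  | succ n ih => simp [gaussBinom_succ, gaussBinom_of_neg t (show (-1 : ℤ) < 0 by norm_num), ih]

theorem one_sub_pow_mul_gaussBinom (n : ℕ) (k : ℤ) :
    (1 - t ^ k.toNat) * gaussBinom t n k =
      (1 - t ^ (n + 1 - k).toNat) * gaussBinom t n (k - 1) := by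
  induction n generalizing k with
  | zero =>
    rcases eq_or_ne k 0 with rfl | h0
    · simp [gaussBinom_zero]
    rcases eq_or_ne k 1 with rfl | h1
    · simp [gaussBinom_zero]
    simp [gaussBinom_zero, h0, sub_eq_zero, h1]
  | succ n ih =>
    have h₁ := ih k
    have h₂ := ih (k - 1)
    rw [sub_sub, one_add_one_eq_two, show (n : ℤ) + 1 - (k - 1) = n + 1 + 1 - k by ring] at h₂
    rw [gaussBinom_succ, gaussBinom_succ, sub_sub, one_add_one_eq_two]
    push_cast
    -- modulo `h₁` and `h₂` both sides are `(1 - t ^ e) * [n, k - 1]`, with exponents `e` that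
    -- agree unless `k - 1 ∉ [0, n]`, where `[n, k - 1] = 0`
    suffices t ^ (k.toNat + (n + 1 - k).toNat) * gaussBinom t n (k - 1) =
        t ^ ((k - 1).toNat + (n + 1 + 1 - k).toNat) * gaussBinom t n (k - 1) by
      linear_combination t ^ k.toNat * h₁ + h₂ - this
    by_cases hk : gaussBinom t n (k - 1) = 0
    · rw [hk, mul_zero, mul_zero]
    · have := support_gaussBinom_subset t n hk
      simp only [Set.mem_Icc] at this
      congr 2
      omega

theorem gaussBinom_succ' (n : ℕ) (k : ℤ) :
    gaussBinom t (n + 1) k =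
      gaussBinom t n k + t ^ (n + 1 - k).toNat * gaussBinom t n (k - 1) := by
  rw [gaussBinom_succ]
  linear_combination -one_sub_pow_mul_gaussBinom t n k

theorem gaussBinom_symm (n : ℕ) (k : ℤ) : gaussBinom t n (n - k) = gaussBinom t n k := by
  induction n generalizing k with
  | zero => simp [gaussBinom_zero]
  | succ n ih =>
    rw [gaussBinom_succ, gaussBinom_succ',
      show ((n + 1 : ℕ) : ℤ) - k - 1 = n - k by push_cast; ring,
      show ((n + 1 : ℕ) : ℤ) - k = n - (k - 1) by push_cast; ring, ih, ih]
    ring_nf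

theorem gaussBinom_mul_prod_one_sub_pow {n k : ℕ} (hk : k ≤ n) :
    gaussBinom t n k * ∏ i ∈ Icc 1 k, (1 - t ^ i) = ∏ i ∈ range k, (1 - t ^ (n - i)) := by
  induction k with
  | zero => simp [gaussBinom_zero_right]
  | succ k ih =>
    have hratio := one_sub_pow_mul_gaussBinom t n (k + 1)
    rw [show ((n : ℤ) + 1 - (k + 1)).toNat = n - k by omega, add_sub_cancel_right,
      show ((k : ℤ) + 1).toNat = k + 1 by omega] at hratio
    rw [prod_Icc_succ_top (by omega), prod_range_succ, ← ih (by omega)]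
    push_cast
    linear_combination (∏ i ∈ Icc 1 k, (1 - t ^ i)) * hratio

theorem prod_one_sub_pow_smodEq_one {ι : Type*} {s : Finset ι} {e : ι → ℕ} {d : ℕ}
    (h : ∀ i ∈ s, d ≤ e i) : ∏ i ∈ s, (1 - t ^ e i) ≡ 1 [SMOD Ideal.span {t ^ d}] := by
  calc ∏ i ∈ s, (1 - t ^ e i) ≡ ∏ _i ∈ s, 1 [SMOD Ideal.span {t ^ d}] :=
        SModEq.prod fun i hi => by
          rw [SModEq.sub_mem, sub_sub_cancel_left, neg_mem_iff, Ideal.mem_span_singleton]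
          exact pow_dvd_pow t (h i hi)
    _ = 1 := prod_const_one

theorem prod_one_sub_pow_mul_gaussBinom_smodEq_one {N : ℕ} {m : ℤ} (hm : m.natAbs ≤ N) :
    (∏ i ∈ Icc 1 N, (1 - t ^ i)) * gaussBinom t (2 * N) (N + m) ≡ 1
      [SMOD Ideal.span {t ^ (N - m.natAbs + 1)}] := by
  set K := N - m.natAbs
  have hcentral : gaussBinom t (2 * N) (N + m) = gaussBinom t (2 * N) K := by
    rcases le_or_gt 0 m with h | h
    · rw [← gaussBinom_symm]; congr 1; push_cast; omega
    · congr 1; omega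
  have hsplit : ∏ i ∈ Icc 1 N, (1 - t ^ i) =
      (∏ i ∈ Icc 1 K, (1 - t ^ i)) * ∏ i ∈ Ioc K N, (1 - t ^ i) := by
    have hIcc (j : ℕ) : Icc 1 j = Ioc 0 j := Icc_add_one_left_eq_Ioc 0 j
    rw [hIcc, hIcc, prod_Ioc_consecutive _ K.zero_le (Nat.sub_le N _)]
  calc (∏ i ∈ Icc 1 N, (1 - t ^ i)) * gaussBinom t (2 * N) (N + m)
      = (gaussBinom t (2 * N) K * ∏ i ∈ Icc 1 K, (1 - t ^ i)) * ∏ i ∈ Ioc K N, (1 - t ^ i) := by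
        rw [hcentral, hsplit]; ring
    _ = (∏ i ∈ range K, (1 - t ^ (2 * N - i))) * ∏ i ∈ Ioc K N, (1 - t ^ i) := by
        rw [gaussBinom_mul_prod_one_sub_pow t (by omega)]
    _ ≡ 1 * 1 [SMOD Ideal.span {t ^ (K + 1)}] :=
        SModEq.mul (prod_one_sub_pow_smodEq_one t fun i hi => by simp at hi; omega)
          (prod_one_sub_pow_smodEq_one t (e := fun i => i) fun i hi => by simp at hi; omega)
    _ = 1 := mul_one 1

end GaussBinom

theorem finsum_mul_one_add_zpow_mul {A : Type*} [CommSemiring A] (z : Aˣ) {c : ℤ → A}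
    (hc : c.HasFiniteSupport) (e : ℤ) (s : A) :
    (∑ᶠ m, c m * ↑(z ^ m)) * (1 + ↑(z ^ e) * s) = ∑ᶠ m, (c m + s * c (m - e)) * ↑(z ^ m) := by
  have hfin (d : ℤ) : (fun m => c (m - d) * ↑(z ^ m)).HasFiniteSupport :=
    (hc.comp_of_injective (sub_left_injective (b := d))).fun_mul_left _
  calc (∑ᶠ m, c m * ↑(z ^ m)) * (1 + ↑(z ^ e) * s)
      = ∑ᶠ m, c m * ↑(z ^ m) + ∑ᶠ m, s * (c m * ↑(z ^ (m + e))) := by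
        rw [mul_add, mul_one, finsum_mul' _ _ (by simpa using hfin 0)]
        refine congrArg _ (finsum_congr fun m => ?_)
        rw [zpow_add, Units.val_mul]; ring
    _ = ∑ᶠ m, c m * ↑(z ^ m) + ∑ᶠ m, s * (c (m - e) * ↑(z ^ m)) := by
        rw [← finsum_comp_equiv (Equiv.addRight e) (f := fun m => s * (c (m - e) * ↑(z ^ m)))]
        simp
    _ = ∑ᶠ m, (c m + s * c (m - e)) * ↑(z ^ m) := by
        rw [← finsum_add_distrib (by simpa using hfin 0) (.fun_mul_right (fun _ => s) (hfin e))]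
        exact finsum_congr fun m => by ring

section Jacobi

variable {A : Type*} [CommRing A]

def jacobiCoeff (q : A) (a b : ℕ) (m : ℤ) : A :=
  gaussBinom (q ^ 2) (a + b) (b + m) * q ^ m.natAbs ^ 2

theorem support_jacobiCoeff_subset (q : A) (a b : ℕ) :
    Function.support (jacobiCoeff q a b) ⊆ Set.Icc (-b : ℤ) a := fun m hm => by
  have hne : gaussBinom (q ^ 2) (a + b) (b + m) ≠ 0 := fun h => hm (by simp [jacobiCoeff, h])
  have := support_gaussBinom_subset _ _ hne
  simp only [Set.mem_Icc] at this ⊢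
  push_cast at this
  omega

theorem jacobiCoeff_succ_left (q : A) (a b : ℕ) (m : ℤ) :
    jacobiCoeff q (a + 1) b m =
      jacobiCoeff q a b m + q ^ (2 * a + 1) * jacobiCoeff q a b (m - 1) := by
  unfold jacobiCoeff
  rw [show a + 1 + b = a + b + 1 by ring, gaussBinom_succ',
    show (b : ℤ) + (m - 1) = b + m - 1 by ring]
  by_cases h : gaussBinom (q ^ 2) (a + b) (b + m - 1) = 0
  · simp [h]
  have hk := support_gaussBinom_subset _ _ h
  simp only [Set.mem_Icc] at hk
  have hexp : ((q ^ 2) ^ (((a + b : ℕ) : ℤ) + 1 - (b + m)).toNat) * q ^ m.natAbs ^ 2 =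
      q ^ (2 * a + 1) * q ^ (m - 1).natAbs ^ 2 := by
    rw [← pow_mul, ← pow_add, ← pow_add]
    congr 1
    zify
    rw [Int.toNat_of_nonneg (by omega)]
    simp only [sq_abs]
    ring
  linear_combination gaussBinom (q ^ 2) (a + b) (b + m - 1) * hexp

theorem jacobiCoeff_succ_right (q : A) (a b : ℕ) (m : ℤ) :
    jacobiCoeff q a (b + 1) m =
      jacobiCoeff q a b m + q ^ (2 * b + 1) * jacobiCoeff q a b (m + 1) := by
  unfold jacobiCoeff
  rw [show a + (b + 1) = a + b + 1 by ring, gaussBinom_succ]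
  push_cast
  rw [show (b : ℤ) + 1 + m - 1 = b + m by ring, show (b : ℤ) + (m + 1) = b + 1 + m by ring]
  by_cases h : gaussBinom (q ^ 2) (a + b) (b + 1 + m) = 0
  · simp [h]
  have hk := support_gaussBinom_subset _ _ h
  simp only [Set.mem_Icc] at hk
  have hexp : ((q ^ 2) ^ ((b : ℤ) + 1 + m).toNat) * q ^ m.natAbs ^ 2 =
      q ^ (2 * b + 1) * q ^ (m + 1).natAbs ^ 2 := by
    rw [← pow_mul, ← pow_add, ← pow_add]
    congr 1
    zify
    rw [Int.toNat_of_nonneg (by omega)]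
    simp only [sq_abs]
    ring
  linear_combination gaussBinom (q ^ 2) (a + b) (b + 1 + m) * hexp

theorem jacobiCoeff_hasFiniteSupport (q : A) (a b : ℕ) : (jacobiCoeff q a b).HasFiniteSupport :=
  (Set.finite_Icc _ _).subset (support_jacobiCoeff_subset q a b)

theorem jacobi_triple_product_finite (q : A) (z : Aˣ) (a b : ℕ) :
    (∏ j ∈ Icc 1 a, (1 + ↑z * q ^ (2 * j - 1))) * ∏ j ∈ Icc 1 b, (1 + ↑z⁻¹ * q ^ (2 * j - 1)) =
      ∑ᶠ m : ℤ, jacobiCoeff q a b m * ↑(z ^ m) := by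
  induction a with
  | zero =>
    induction b with
    | zero =>
      rw [finsum_eq_single _ 0 fun m hm => by simp [jacobiCoeff, gaussBinom_zero, hm]]
      simp [jacobiCoeff, gaussBinom_zero]
    | succ b ih =>
      rw [prod_Icc_succ_top (by omega), ← mul_assoc, ih,
        show 2 * (b + 1) - 1 = 2 * b + 1 by omega,
        show ((z⁻¹ : Aˣ) : A) = ↑(z ^ (-1 : ℤ)) by simp,
        finsum_mul_one_add_zpow_mul z (jacobiCoeff_hasFiniteSupport q 0 b)]
      simp only [sub_neg_eq_add, jacobiCoeff_succ_right]
  | succ a ih =>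
    rw [prod_Icc_succ_top (by omega), mul_right_comm, ih,
      show 2 * (a + 1) - 1 = 2 * a + 1 by omega,
      show (z : A) = ↑(z ^ (1 : ℤ)) by simp,
      finsum_mul_one_add_zpow_mul z (jacobiCoeff_hasFiniteSupport q a b)]
    simp only [jacobiCoeff_succ_left]

end Jacobi

theorem PowerSeries.coeff_mul_C_mul_X_pow_of_smodEq {R : Type*} [CommRing R] {f : R⟦X⟧} {d : ℕ}
    (hf : f ≡ 1 [SMOD Ideal.span {(X : R⟦X⟧) ^ d}]) (r : R) {e n : ℕ} (hn : n < d + e) :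
    coeff n (f * (C r * X ^ e)) = if n = e then r else 0 := by
  rw [SModEq.sub_mem, Ideal.mem_span_singleton] at hf
  obtain ⟨g, hg⟩ := hf
  rw [show f * (C r * X ^ e) = C r * X ^ e + X ^ (d + e) * (g * C r) by
      linear_combination (C r * X ^ e) * hg,
    map_add, coeff_X_pow_mul', if_neg (show ¬d + e ≤ n by omega), add_zero, coeff_C_mul_X_pow]

theorem coeff_prod_one_sub_X_sq_pow_mul_jacobiCoeff {R : Type*} [CommRing R] (n : ℕ) {m : ℤ}
    (hm : m.natAbs ≤ n + 1) (r : R) :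
    coeff n ((∏ k ∈ Icc 1 (n + 1), (1 - (X ^ 2 : R⟦X⟧) ^ k)) *
      (jacobiCoeff X (n + 1) (n + 1) m * PowerSeries.C r)) = if m ^ 2 = n then r else 0 := by
  have hmod := prod_one_sub_pow_mul_gaussBinom_smodEq_one (X ^ 2 : R⟦X⟧) hm
  rw [← pow_mul] at hmod
  have hn : n < 2 * (n + 1 - m.natAbs + 1) + m.natAbs ^ 2 := by
    have := Nat.le_self_pow two_ne_zero m.natAbs
    omega
  have hsq : n = m.natAbs ^ 2 ↔ m ^ 2 = n := by
    rw [← Int.natAbs_sq]; norm_cast; exact eq_comm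
  rw [jacobiCoeff, show n + 1 + (n + 1) = 2 * (n + 1) by ring,
    show ∀ P G Y Z : R⟦X⟧, P * (G * Y * Z) = P * G * (Z * Y) from fun _ _ _ _ => by ring,
    coeff_mul_C_mul_X_pow_of_smodEq hmod r hn]
  simp only [hsq]

section UnitT

variable (R : Type*) [Semiring R]

noncomputable def unitT : R[T;T⁻¹]⟦X⟧ˣ where
  val := PowerSeries.C (T 1)
  inv := PowerSeries.C (T (-1))
  val_inv := by rw [← map_mul, ← T_add]; simp
  inv_val := by rw [← map_mul, ← T_add]; simp

theorem val_unitT : ((unitT R : R[T;T⁻¹]⟦X⟧ˣ) : R[T;T⁻¹]⟦X⟧) = PowerSeries.C (T 1) := rfl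

theorem val_inv_unitT : (((unitT R)⁻¹ : R[T;T⁻¹]⟦X⟧ˣ) : R[T;T⁻¹]⟦X⟧) = PowerSeries.C (T (-1)) :=
  rfl

theorem val_unitT_zpow (m : ℤ) :
    ((unitT R ^ m : R[T;T⁻¹]⟦X⟧ˣ) : R[T;T⁻¹]⟦X⟧) = PowerSeries.C (T m) := by
  induction m using Int.induction_on with
  | zero => simp [T_zero]
  | succ i ih => rw [zpow_add_one, Units.val_mul, ih, T_add, map_mul]; rfl
  | pred i ih => rw [zpow_sub_one, Units.val_mul, ih, T_sub, map_mul]; rfl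

end UnitT

/-- Coefficientwise form in `ℤ[z, z⁻¹]⟦q⟧`: the factors with `k > n + 1` do not affect the
coefficient of `q ^ n`. -/
theorem jacobi_triple_product (n : ℕ) :
    PowerSeries.coeff (R := LaurentPolynomial ℤ) n
      (∏ k ∈ Finset.Icc 1 (n + 1),
        ((1 - (PowerSeries.X : PowerSeries (LaurentPolynomial ℤ)) ^ (2 * k)) *
          (1 + PowerSeries.C (R := LaurentPolynomial ℤ) (T 1) * PowerSeries.X ^ (2 * k - 1)) *
          (1 + PowerSeries.C (R := LaurentPolynomial ℤ) (T (-1)) * PowerSeries.X ^ (2 * k - 1)))) =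
      ∑ m ∈ Finset.Icc (-(n : ℤ)) (n : ℤ),
        if m ^ 2 = (n : ℤ) then T m else 0 := by
  have hJ := jacobi_triple_product_finite (X : ℤ[T;T⁻¹]⟦X⟧) (unitT ℤ) (n + 1) (n + 1)
  rw [finsum_eq_sum_of_support_subset (s := Icc (-(n + 1 : ℕ) : ℤ) (n + 1 : ℕ)) _
    ((Function.support_mul_subset_left _ _).trans
      (by simpa using support_jacobiCoeff_subset (X : ℤ[T;T⁻¹]⟦X⟧) (n + 1) (n + 1)))] at hJ
  simp only [val_unitT, val_inv_unitT, val_unitT_zpow] at hJ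
  simp_rw [prod_mul_distrib, pow_mul]
  rw [mul_assoc, hJ, mul_sum, map_sum, sum_congr rfl fun m hm =>
    coeff_prod_one_sub_X_sq_pow_mul_jacobiCoeff n (by simp only [mem_Icc] at hm; omega) (T m)]
  refine (sum_subset (Icc_subset_Icc (by omega) (by omega)) fun m hm hm' => if_neg ?_).symm
  simp only [mem_Icc] at hm hm'
  intro hsq
  rcases (show m = n + 1 ∨ m = -(n + 1) by omega) with rfl | rfl <;> nlinarith
end

section
/- The number of partitions of n in which no part appears more than d times equals the number of partitions of n into parts not divisible by d+1. -/
open Finset Nat.Partition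

theorem glaisher_general (d : ℕ) (n : ℕ) :
    Nat.card {p : Nat.Partition n // ∀ i, p.parts.count i ≤ d} =
      Nat.card {p : Nat.Partition n // ∀ i ∈ p.parts, ¬ (d + 1) ∣ i} := by
  have hcount : Nat.card {p : Nat.Partition n // ∀ i, p.parts.count i ≤ d} =
      #(countRestricted n (d + 1)) := by
    rw [← Nat.card_eq_finsetCard]
    refine Nat.card_congr (Equiv.subtypeEquivRight fun p => ?_)
    simp only [countRestricted, mem_filter, mem_univ, true_and, Nat.lt_succ_iff]
    exact ⟨fun h i _ => h i, fun h i => (em (i ∈ p.parts)).elim (h i)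
      fun hi => (Multiset.count_eq_zero.2 hi).trans_le d.zero_le⟩
  have hdiv : Nat.card {p : Nat.Partition n // ∀ i ∈ p.parts, ¬ (d + 1) ∣ i} =
      #(restricted n (¬ (d + 1) ∣ ·)) := by
    rw [← Nat.card_eq_finsetCard]
    exact Nat.card_congr (Equiv.subtypeEquivRight fun p => by simp [restricted])
  rw [hcount, hdiv, card_restricted_eq_card_countRestricted n d.succ_pos]

theorem glaisher (d : ℕ) (hd : 0 < d) (n : ℕ) :
    Nat.card {p : Nat.Partition n // ∀ i, p.parts.count i ≤ d} =
      Nat.card {p : Nat.Partition n // ∀ i ∈ p.parts, ¬ (d + 1) ∣ i} :=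
  glaisher_general d n
end
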